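/- arXiv:2110.10098 — 6 statements merged into one kernel-verified Lean document; each statement's English description precedes it below -/
import Mathlib

section
/- Let Ω ⊆ ℝ^N be a bounded open set and let Ω' ⊆ ℝ^N be an open set containing the closure of Ω. Let u : ℝ^N → ℝ be measurable and suppose that: (i) ∫_{Ω'} |u(x)|^p dx < ∞ and ∬_{Ω'×Ω'} |u(x)−u(y)|^p / |x−y|^{N+ps} dx dy < ∞; (ii) ∫_{ℝ^N} |u(x)|^{p−1} / (1+|x|)^{N+ps} dx < ∞; (iii) u = 0 almost everywhere on ℝ^N ∖ Ω. Then ∫_{ℝ^N} |u(x)|^p dx < ∞ and [u]_{s,p}^p = ∬_{ℝ^N×ℝ^N} |u(x)−u(y)|^p / |x−y|^{N+ps} dx dy < ∞. -/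
/-!
Split `ℝᴺ × ℝᴺ` into `Ω' × Ω'`, where the Gagliardo integrand is integrable by hypothesis, and
its complement. Since `u` vanishes off `Ω`, the integrand vanishes on the complement unless one
point lies in `Ω` and the other outside `Ω'`. The compact set `closure Ω` lies in the open set
`Ω'`, so two such points are at distance at least some `δ > 0`, and the integrand is then bounded
by `|u x|^p` times the kernel `‖x - y‖^{-(N+ps)}` cut off at radius `δ`. Integrating in the far
point first gives `∫_Ω |u|^p` times the integral of the cut-off kernel, which is finite because
`N + ps > N`.
-/

open MeasureTheory Set Filter
open scoped ENNReal

lemma exists_pos_le_dist_of_closure_subset {X : Type*} [PseudoMetricSpace X] [ProperSpace X]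
    {s t : Set X} (hs : Bornology.IsBounded s) (ht : IsOpen t) (hst : closure s ⊆ t) :
    ∃ δ > 0, ∀ x ∈ s, ∀ y ∉ t, δ ≤ dist x y := by
  obtain ⟨δ, hδ, hthick⟩ := hs.isCompact_closure.exists_thickening_subset_open ht hst
  refine ⟨δ, hδ, fun x hx y hy => not_lt.1 fun hxy => hy (hthick ?_)⟩
  exact Metric.mem_thickening_iff.2 ⟨x, subset_closure hx, by rwa [dist_comm]⟩

lemma Real.rpow_neg_le_mul_one_add_rpow_neg {δ t k : ℝ} (hδ : 0 < δ) (ht : δ ≤ t) (hk : 0 ≤ k) :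
    t ^ (-k) ≤ ((1 + δ) / δ) ^ k * (1 + t) ^ (-k) := by
  have ht0 : 0 < t := hδ.trans_le ht
  have hinv : t⁻¹ ≤ (1 + δ) / δ * (1 + t)⁻¹ := by
    rw [div_mul_eq_mul_div, le_div_iff₀ hδ, ← div_eq_mul_inv, inv_mul_eq_div,
      div_le_div_iff₀ ht0 (by positivity)]
    nlinarith
  calc t ^ (-k) = t⁻¹ ^ k := by rw [Real.rpow_neg ht0.le, Real.inv_rpow ht0.le]
    _ ≤ ((1 + δ) / δ * (1 + t)⁻¹) ^ k := Real.rpow_le_rpow (by positivity) hinv hk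
    _ = ((1 + δ) / δ) ^ k * (1 + t) ^ (-k) := by
      rw [Real.mul_rpow (by positivity) (by positivity), Real.inv_rpow (by positivity),
        Real.rpow_neg (by positivity)]

section ProdConvolution

variable {G : Type*} [MeasurableSpace G] [AddGroup G] [MeasurableAdd G] [MeasurableSub₂ G]
  (μ : Measure G) [SFinite μ] [μ.IsAddRightInvariant] {f g : G → ℝ≥0∞}

lemma lintegral_prod_mul_comp_sub (hf : Measurable f) (hg : Measurable g) :
    ∫⁻ z, f z.1 * g (z.2 - z.1) ∂μ.prod μ = (∫⁻ x, f x ∂μ) * ∫⁻ y, g y ∂μ := by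
  rw [lintegral_prod _ (by fun_prop)]
  calc ∫⁻ x, ∫⁻ y, f x * g (y - x) ∂μ ∂μ = ∫⁻ x, f x * ∫⁻ y, g y ∂μ ∂μ := by
        refine lintegral_congr fun x => ?_
        rw [lintegral_const_mul _ (by fun_prop), lintegral_sub_right_eq_self]
    _ = (∫⁻ x, f x ∂μ) * ∫⁻ y, g y ∂μ := lintegral_mul_const _ hf

lemma lintegral_prod_mul_comp_sub_swap (hf : Measurable f) (hg : Measurable g) :
    ∫⁻ z, f z.2 * g (z.1 - z.2) ∂μ.prod μ = (∫⁻ x, f x ∂μ) * ∫⁻ y, g y ∂μ := by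
  rw [← lintegral_prod_swap]
  exact lintegral_prod_mul_comp_sub μ hf hg

end ProdConvolution

section TruncatedKernel

variable {E : Type*} [NormedAddCommGroup E]

noncomputable def truncatedKernel (δ k : ℝ) (z : E) : ℝ≥0∞ :=
  {z : E | δ ≤ ‖z‖}.indicator (fun z => ENNReal.ofReal (‖z‖ ^ (-k))) z

lemma ofReal_div_rpow_eq_mul_truncatedKernel {a δ k : ℝ} {z : E} (ha : 0 ≤ a) (hz : δ ≤ ‖z‖) :
    ENNReal.ofReal (a / ‖z‖ ^ k) = ENNReal.ofReal a * truncatedKernel δ k z := by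
  rw [truncatedKernel, indicator_of_mem (show z ∈ {z : E | δ ≤ ‖z‖} from hz),
    ← ENNReal.ofReal_mul ha, Real.rpow_neg (norm_nonneg _), div_eq_mul_inv]

lemma measurable_truncatedKernel [MeasurableSpace E] [OpensMeasurableSpace E] (δ k : ℝ) :
    Measurable (truncatedKernel (E := E) δ k) :=
  Measurable.indicator (by fun_prop) (measurableSet_le measurable_const measurable_norm)

lemma lintegral_truncatedKernel_lt_top [NormedSpace ℝ E] [FiniteDimensional ℝ E]
    [MeasurableSpace E] [BorelSpace E] (μ : Measure E) [μ.IsAddHaarMeasure] {δ k : ℝ}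
    (hδ : 0 < δ) (hk : Module.finrank ℝ E < k) : ∫⁻ z, truncatedKernel δ k z ∂μ < ⊤ := by
  have hk0 : 0 ≤ k := (Nat.cast_nonneg _).trans hk.le
  calc ∫⁻ z, truncatedKernel δ k z ∂μ
      ≤ ∫⁻ z, ENNReal.ofReal (((1 + δ) / δ) ^ k) * ENNReal.ofReal ((1 + ‖z‖) ^ (-k)) ∂μ := by
        refine lintegral_mono fun z => ?_
        by_cases hz : δ ≤ ‖z‖
        · rw [truncatedKernel, indicator_of_mem (show z ∈ {z : E | δ ≤ ‖z‖} from hz),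
            ← ENNReal.ofReal_mul (by positivity)]
          exact ENNReal.ofReal_le_ofReal (Real.rpow_neg_le_mul_one_add_rpow_neg hδ hz hk0)
        · simp [truncatedKernel, hz]
    _ = ENNReal.ofReal (((1 + δ) / δ) ^ k) * ∫⁻ z, ENNReal.ofReal ((1 + ‖z‖) ^ (-k)) ∂μ :=
        lintegral_const_mul _ (by fun_prop)
    _ < ⊤ := ENNReal.mul_lt_top ENNReal.ofReal_lt_top (finite_integral_one_add_norm hk)

lemma ofReal_rpow_div_le_indicator_add_truncatedKernel {u : E → ℝ} {Ω Ω' : Set E} {p k δ : ℝ}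
    (hp : 0 < p) (hΩΩ' : Ω ⊆ Ω') (hdist : ∀ x ∈ Ω, ∀ y ∉ Ω', δ ≤ dist x y) {x y : E}
    (hx : x ∉ Ω → u x = 0) (hy : y ∉ Ω → u y = 0) :
    ENNReal.ofReal (|u x - u y| ^ p / ‖x - y‖ ^ k) ≤
      (Ω' ×ˢ Ω').indicator (fun z => ENNReal.ofReal (|u z.1 - u z.2| ^ p / ‖z.1 - z.2‖ ^ k)) (x, y)
        + Ω.indicator (fun x => ENNReal.ofReal (|u x| ^ p)) x * truncatedKernel δ k (y - x)
        + Ω.indicator (fun x => ENNReal.ofReal (|u x| ^ p)) y * truncatedKernel δ k (x - y) := by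
  by_cases hxy : (x, y) ∈ Ω' ×ˢ Ω'
  · rw [indicator_of_mem hxy, add_assoc]
    exact le_self_add
  rw [indicator_of_notMem hxy, zero_add]
  by_cases hxΩ : x ∈ Ω
  · have hyΩ' : y ∉ Ω' := fun h => hxy ⟨hΩΩ' hxΩ, h⟩
    rw [hy fun h => hyΩ' (hΩΩ' h), sub_zero, indicator_of_mem hxΩ, norm_sub_rev,
      ← ofReal_div_rpow_eq_mul_truncatedKernel (by positivity)
        (by rw [← dist_eq_norm, dist_comm]; exact hdist x hxΩ y hyΩ')]
    exact le_self_add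
  by_cases hyΩ : y ∈ Ω
  · have hxΩ' : x ∉ Ω' := fun h => hxy ⟨h, hΩΩ' hyΩ⟩
    rw [hx hxΩ, zero_sub, abs_neg, indicator_of_mem hyΩ,
      ← ofReal_div_rpow_eq_mul_truncatedKernel (by positivity)
        (by rw [← dist_eq_norm, dist_comm]; exact hdist y hyΩ x hxΩ')]
    exact le_add_self
  simp [hx hxΩ, hy hyΩ, Real.zero_rpow hp.ne']

lemma lintegral_lintegral_ofReal_rpow_div_le [MeasurableSpace E] [BorelSpace E]
    [SecondCountableTopology E] (μ : Measure E) [SFinite μ] [μ.IsAddRightInvariant]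
    {u : E → ℝ} (hu : Measurable u) {Ω Ω' : Set E} (hΩ : MeasurableSet Ω)
    (hΩ' : MeasurableSet Ω') {p k δ : ℝ} (hp : 0 < p) (hΩΩ' : Ω ⊆ Ω')
    (hdist : ∀ x ∈ Ω, ∀ y ∉ Ω', δ ≤ dist x y) (hzero : ∀ᵐ x ∂μ, x ∉ Ω → u x = 0) :
    ∫⁻ x, ∫⁻ y, ENNReal.ofReal (|u x - u y| ^ p / ‖x - y‖ ^ k) ∂μ ∂μ ≤
      (∫⁻ x in Ω', ∫⁻ y in Ω', ENNReal.ofReal (|u x - u y| ^ p / ‖x - y‖ ^ k) ∂μ ∂μ) +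
        2 * (∫⁻ x in Ω, ENNReal.ofReal (|u x| ^ p) ∂μ) * ∫⁻ z, truncatedKernel δ k z ∂μ := by
  have hF : Measurable fun z : E × E => ENNReal.ofReal (|u z.1 - u z.2| ^ p / ‖z.1 - z.2‖ ^ k) := by
    fun_prop
  have hF' := hF.indicator (hΩ'.prod hΩ')
  have hf : Measurable (Ω.indicator fun x => ENNReal.ofReal (|u x| ^ p)) :=
    (by fun_prop : Measurable fun x => ENNReal.ofReal (|u x| ^ p)).indicator hΩ
  have hker := measurable_truncatedKernel (E := E) δ k
  have hae : ∀ᵐ z ∂μ.prod μ, (z.1 ∉ Ω → u z.1 = 0) ∧ (z.2 ∉ Ω → u z.2 = 0) :=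
    (Measure.quasiMeasurePreserving_fst.ae hzero).and (Measure.quasiMeasurePreserving_snd.ae hzero)
  calc ∫⁻ x, ∫⁻ y, ENNReal.ofReal (|u x - u y| ^ p / ‖x - y‖ ^ k) ∂μ ∂μ
      = ∫⁻ z, ENNReal.ofReal (|u z.1 - u z.2| ^ p / ‖z.1 - z.2‖ ^ k) ∂μ.prod μ := by
        rw [lintegral_prod _ hF.aemeasurable]
    _ ≤ _ := lintegral_mono_ae (hae.mono fun z hz =>
        ofReal_rpow_div_le_indicator_add_truncatedKernel hp hΩΩ' hdist hz.1 hz.2)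
    _ = _ := by
      rw [lintegral_add_left (by fun_prop), lintegral_add_left hF',
        lintegral_indicator (hΩ'.prod hΩ'), ← Measure.prod_restrict,
        lintegral_prod _ hF.aemeasurable, lintegral_prod_mul_comp_sub μ hf hker,
        lintegral_prod_mul_comp_sub_swap μ hf hker, lintegral_indicator hΩ]
      ring

end TruncatedKernel

lemma lintegral_eq_setLIntegral_of_ae_notMem_eq_zero {α : Type*} [MeasurableSpace α]
    {μ : Measure α} {s : Set α} {f : α → ℝ≥0∞} (hs : MeasurableSet s)
    (hf : ∀ᵐ x ∂μ, x ∉ s → f x = 0) : ∫⁻ x, f x ∂μ = ∫⁻ x in s, f x ∂μ := by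
  rw [← lintegral_indicator hs]
  exact lintegral_congr_ae (hf.mono fun x hx => by by_cases h : x ∈ s <;> simp [h, hx])

theorem statement0_general {N : ℕ} {p s : ℝ} (hp : 2 ≤ p)
    (hs : s ∈ Set.Ioo (0 : ℝ) 1)
    (Ω Ω' : Set (EuclideanSpace ℝ (Fin N)))
    (hΩo : IsOpen Ω) (hΩb : Bornology.IsBounded Ω)
    (hΩ'o : IsOpen Ω') (hcl : closure Ω ⊆ Ω')
    (u : EuclideanSpace ℝ (Fin N) → ℝ) (hu : Measurable u)
    (hLp : ∫⁻ x in Ω', ENNReal.ofReal (|u x| ^ p) < ⊤)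
    (hGag : ∫⁻ x in Ω', ∫⁻ y in Ω',
        ENNReal.ofReal (|u x - u y| ^ p / ‖x - y‖ ^ ((N : ℝ) + p * s)) < ⊤)
    (hzero : ∀ᵐ x, x ∉ Ω → u x = 0) :
    (∫⁻ x, ENNReal.ofReal (|u x| ^ p) < ⊤) ∧
      (∫⁻ x, ∫⁻ y,
        ENNReal.ofReal (|u x - u y| ^ p / ‖x - y‖ ^ ((N : ℝ) + p * s)) < ⊤) := by
  have hp0 : 0 < p := by linarith
  have hΩΩ' : Ω ⊆ Ω' := subset_closure.trans hcl
  have hLpΩ : ∫⁻ x in Ω, ENNReal.ofReal (|u x| ^ p) < ⊤ :=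
    (lintegral_mono_set hΩΩ').trans_lt hLp
  constructor
  · rwa [lintegral_eq_setLIntegral_of_ae_notMem_eq_zero hΩo.measurableSet
      (hzero.mono fun x hx hxΩ => by simp [hx hxΩ, Real.zero_rpow hp0.ne'])]
  obtain ⟨δ, hδ, hdist⟩ := exists_pos_le_dist_of_closure_subset hΩb hΩ'o hcl
  have hK : ∫⁻ z, truncatedKernel δ (N + p * s) z < ⊤ :=
    lintegral_truncatedKernel_lt_top volume hδ
      (by rw [finrank_euclideanSpace_fin]; nlinarith [hs.1])
  refine (lintegral_lintegral_ofReal_rpow_div_le volume hu hΩo.measurableSet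
    hΩ'o.measurableSet hp0 hΩΩ' hdist hzero).trans_lt ?_
  finiteness

/-- If `u` is measurable, belongs to `W^{s,p}(Ω')` for an open set
`Ω' ⊇ closure Ω`, satisfies the tail condition, and vanishes a.e. outside the bounded open
set `Ω`, then `u ∈ W^{s,p}_0(Ω)`: it is `p`-integrable on `ℝ^N` and its Gagliardo seminorm
is finite. -/
theorem statement0 {N : ℕ} (hN : 1 ≤ N) {p s : ℝ} (hp : 2 ≤ p)
    (hs : s ∈ Set.Ioo (0 : ℝ) 1) (hNps : p * s < (N : ℝ))
    (Ω Ω' : Set (EuclideanSpace ℝ (Fin N)))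
    (hΩo : IsOpen Ω) (hΩb : Bornology.IsBounded Ω)
    (hΩ'o : IsOpen Ω') (hcl : closure Ω ⊆ Ω')
    (u : EuclideanSpace ℝ (Fin N) → ℝ) (hu : Measurable u)
    (hLp : ∫⁻ x in Ω', ENNReal.ofReal (|u x| ^ p) < ⊤)
    (hGag : ∫⁻ x in Ω', ∫⁻ y in Ω',
        ENNReal.ofReal (|u x - u y| ^ p / ‖x - y‖ ^ ((N : ℝ) + p * s)) < ⊤)
    (hTail : ∫⁻ x, ENNReal.ofReal (|u x| ^ (p - 1) / (1 + ‖x‖) ^ ((N : ℝ) + p * s)) < ⊤)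
    (hzero : ∀ᵐ x, x ∉ Ω → u x = 0) :
    (∫⁻ x, ENNReal.ofReal (|u x| ^ p) < ⊤) ∧
      (∫⁻ x, ∫⁻ y,
        ENNReal.ofReal (|u x - u y| ^ p / ‖x - y‖ ^ ((N : ℝ) + p * s)) < ⊤) :=
  statement0_general hp hs Ω Ω' hΩo hΩb hΩ'o hcl u hu hLp hGag hzero
end

section
/- Let p ∈ [2,∞). For all real numbers a, b one has |a−b|^{p−2}(a−b)(a⁺ − b⁺) ≥ |a⁺ − b⁺|^p, where t⁺ = max(t,0) denotes the positive part. In particular the left-hand side is always nonnegative. -/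
/-- For `p ≥ 2` and all reals `a, b`:
`|a - b|^(p-2) (a - b) (a⁺ - b⁺) ≥ |a⁺ - b⁺|^p`, where `t⁺ = max t 0`.
In particular the left-hand side is nonnegative. -/
theorem statement3 {p : ℝ} (hp : 2 ≤ p) (a b : ℝ) :
    |max a 0 - max b 0| ^ p ≤ |a - b| ^ (p - 2) * (a - b) * (max a 0 - max b 0) ∧
      0 ≤ |a - b| ^ (p - 2) * (a - b) * (max a 0 - max b 0) := by
  set c := max a 0 - max b 0 with hc
  set d := a - b with hd
  have habs : |c| ≤ |d| := abs_max_sub_max_le_abs a b 0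
  have key : |c| ^ p ≤ |d| ^ (p - 2) * d * c := by
    rcases eq_or_ne c 0 with h0 | h0
    · rw [h0, abs_zero, Real.zero_rpow (by linarith), mul_zero]
    · have hcpos : 0 < |c| := abs_pos.mpr h0
      have hsq : c ^ 2 ≤ d * c := by
        rcases le_total b a with hba | hab
        · have hc0 : 0 ≤ c := by
            simp only [hc, sub_nonneg]
            exact max_le_max hba le_rfl
          have hcd : c ≤ d := by
            calc c ≤ |c| := le_abs_self c
            _ ≤ |d| := habs
            _ = d := abs_of_nonneg (by simp [hd]; linarith)
          nlinarith
        · have hc0 : c ≤ 0 := by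
            simp only [hc, sub_nonpos]
            exact max_le_max hab le_rfl
          have hcd : d ≤ c := by
            have hd0 : d ≤ 0 := by simp only [hd]; linarith
            have : -c ≤ -d := by
              calc -c ≤ |c| := neg_le_abs c
              _ ≤ |d| := habs
              _ = -d := abs_of_nonpos hd0
            linarith
          nlinarith
      have h1 : |c| ^ (p - 2) ≤ |d| ^ (p - 2) := by
        exact Real.rpow_le_rpow (abs_nonneg c) habs (by linarith)
      calc |c| ^ p = |c| ^ (p - 2) * |c| ^ (2:ℝ) := by
            rw [← Real.rpow_add hcpos]; ring_nf
        _ = |c| ^ (p - 2) * c ^ 2 := by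
            rw [show (2:ℝ) = ((2:ℕ):ℝ) by norm_num, Real.rpow_natCast, sq_abs]
        _ ≤ |d| ^ (p - 2) * (d * c) := by
            apply mul_le_mul h1 hsq (sq_nonneg c)
              (Real.rpow_nonneg (abs_nonneg d) _)
        _ = |d| ^ (p - 2) * d * c := by ring
  exact ⟨key, le_trans (Real.rpow_nonneg (abs_nonneg c) p) key⟩
end

section
/- Let Ω ⊆ ℝ^N be a bounded measurable set, p ∈ [2,∞), s ∈ (0,1). Let u, v : ℝ^N → ℝ be measurable, set w = (u−v)⁺, and assume w = 0 almost everywhere on ℝ^N ∖ Ω. Define the (pointwise nonnegative) function K(x,y) = (J_p(u(x)−u(y)) − J_p(v(x)−v(y))) · (w(x)−w(y)) / |x−y|^{N+ps}, where J_p(t) = |t|^{p−2}t. If ∬_{ℝ^N×ℝ^N} K(x,y) dx dy ≤ 0, then u ≤ v almost everywhere on ℝ^N. (Strict T-monotonicity of the fractional p-Laplacian.) -/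
/-!
Since `K ≥ 0` and its double integral vanishes, for a.e. `x` we have `K(x, y) = 0` for a.e. `y`.
If `u(x) > v(x)` at such an `x`, choose `y ≠ x` outside the bounded set `Ω` (its complement has
infinite measure) with `w(y) = 0`, i.e. `u(y) ≤ v(y)`. Then `u(x) - u(y) > v(x) - v(y)`, so strict
monotonicity of `J_p` together with `w(x) - w(y) > 0` forces `K(x, y) > 0`, a contradiction.
-/

open MeasureTheory Set

lemma strictMono_abs_rpow_mul {c : ℝ} (hc : 0 ≤ c) : StrictMono fun t : ℝ => |t| ^ c * t := by
  have nonneg_case {a b : ℝ} (hb : 0 ≤ b) (hba : b < a) : |b| ^ c * b < |a| ^ c * a := by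
    have ha : 0 < a := hb.trans_lt hba
    rw [abs_of_nonneg hb, abs_of_pos ha]
    have hpow : b ^ c ≤ a ^ c := Real.rpow_le_rpow hb hba.le hc
    nlinarith [Real.rpow_nonneg hb c, Real.rpow_pos_of_pos ha c]
  intro b a hba
  rcases le_or_gt 0 b with hb | hb
  · exact nonneg_case hb hba
  rcases le_or_gt 0 a with ha | ha
  · have hb' : |b| ^ c * b < 0 := mul_neg_of_pos_of_neg (Real.rpow_pos_of_pos (abs_pos.2 hb.ne) c) hb
    have ha' : 0 ≤ |a| ^ c * a := mul_nonneg (by positivity) ha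
    exact hb'.trans_le ha'
  · have h := nonneg_case (neg_nonneg.2 ha.le) (neg_lt_neg hba)
    simp only [abs_neg, mul_neg] at h
    exact neg_lt_neg_iff.mp h

/-- The integrand `K(x, y)` of the statement, with the exponent `N + ps` written as `r`. -/
noncomputable def fracPLaplacianKernel {E : Type*} [NormedAddCommGroup E] (p r : ℝ)
    (u v : E → ℝ) (x y : E) : ENNReal :=
  ENNReal.ofReal
    (((|u x - u y| ^ (p - 2) * (u x - u y) - |v x - v y| ^ (p - 2) * (v x - v y)) *
        (max (u x - v x) 0 - max (u y - v y) 0)) /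
      ‖x - y‖ ^ r)

lemma measurable_uncurry_fracPLaplacianKernel {E : Type*} [NormedAddCommGroup E]
    [MeasurableSpace E] [BorelSpace E] [SecondCountableTopology E] (p r : ℝ)
    {u v : E → ℝ} (hu : Measurable u) (hv : Measurable v) :
    Measurable (Function.uncurry (fracPLaplacianKernel p r u v)) := by
  unfold Function.uncurry fracPLaplacianKernel
  fun_prop

lemma jp_diff_mul_posPart_diff_pos {q a b c d : ℝ} (hq : 0 ≤ q) (hbd : b ≤ d) (hca : c < a) :
    0 < (|a - b| ^ q * (a - b) - |c - d| ^ q * (c - d)) * (max (a - c) 0 - max (b - d) 0) := by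
  have hJ : |c - d| ^ q * (c - d) < |a - b| ^ q * (a - b) :=
    strictMono_abs_rpow_mul hq (by linarith)
  rw [max_eq_left (by linarith), max_eq_right (by linarith)]
  exact mul_pos (sub_pos.2 hJ) (by linarith)

lemma fracPLaplacianKernel_ne_zero {E : Type*} [NormedAddCommGroup E] {p : ℝ} (hp : 2 ≤ p)
    (r : ℝ) {u v : E → ℝ} {x y : E} (hxy : x ≠ y) (hy : u y ≤ v y) (hx : v x < u x) :
    fracPLaplacianKernel p r u v x y ≠ 0 := by
  have hnum := jp_diff_mul_posPart_diff_pos (sub_nonneg.2 hp) hy hx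
  have hden : 0 < ‖x - y‖ ^ r := Real.rpow_pos_of_pos (norm_pos_iff.2 (sub_ne_zero.2 hxy)) r
  rw [fracPLaplacianKernel, ne_eq, ENNReal.ofReal_eq_zero, not_le]
  exact div_pos hnum hden

lemma ae_ae_eq_zero_of_lintegral_lintegral_eq_zero {α β : Type*} [MeasurableSpace α]
    [MeasurableSpace β] {μ : Measure α} {ν : Measure β} [SFinite ν] {F : α → β → ENNReal}
    (hF : Measurable (Function.uncurry F)) (h : ∫⁻ x, ∫⁻ y, F x y ∂ν ∂μ = 0) :
    ∀ᵐ x ∂μ, ∀ᵐ y ∂ν, F x y = 0 := by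
  filter_upwards [(lintegral_eq_zero_iff hF.lintegral_prod_right).mp h] with x hx
  exact (lintegral_eq_zero_iff hF.of_uncurry_left).mp hx

lemma measure_compl_eq_top_of_isBounded {E : Type*} [NormedAddCommGroup E] [NormedSpace ℝ E]
    [FiniteDimensional ℝ E] [Nontrivial E] [MeasurableSpace E] [BorelSpace E]
    (μ : Measure E) [μ.IsAddHaarMeasure] {s : Set E} (hs : Bornology.IsBounded s) :
    μ sᶜ = ⊤ := by
  have huniv : μ univ ≤ μ s + μ sᶜ := measure_univ_le_add_compl s
  rw [measure_univ_of_isAddLeftInvariant, top_le_iff, ENNReal.add_eq_top] at huniv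
  exact huniv.resolve_left hs.measure_lt_top.ne

theorem statement6_general {N : ℕ} (hN : 1 ≤ N) {p s : ℝ} (hp : 2 ≤ p)
    (Ω : Set (EuclideanSpace ℝ (Fin N)))
    (hΩb : Bornology.IsBounded Ω)
    (u v : EuclideanSpace ℝ (Fin N) → ℝ) (hu : Measurable u) (hv : Measurable v)
    (hw0 : ∀ᵐ x, x ∉ Ω → max (u x - v x) 0 = 0)
    (hK : (∫⁻ x, ∫⁻ y, ENNReal.ofReal
        (((|u x - u y| ^ (p - 2) * (u x - u y) - |v x - v y| ^ (p - 2) * (v x - v y)) *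
            (max (u x - v x) 0 - max (u y - v y) 0)) /
          ‖x - y‖ ^ ((N : ℝ) + p * s))) ≤ 0) :
    ∀ᵐ x, u x ≤ v x := by
  have : Nonempty (Fin N) := ⟨⟨0, hN⟩⟩
  have hK_ae : ∀ᵐ x, ∀ᵐ y, fracPLaplacianKernel p (N + p * s) u v x y = 0 :=
    ae_ae_eq_zero_of_lintegral_lintegral_eq_zero
      (measurable_uncurry_fracPLaplacianKernel _ _ hu hv) (nonpos_iff_eq_zero.mp hK)
  have hΩc : volume Ωᶜ ≠ 0 := by
    rw [measure_compl_eq_top_of_isBounded volume hΩb]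
    exact ENNReal.top_ne_zero
  filter_upwards [hK_ae] with x hx
  by_contra! hvu
  obtain ⟨y, hyΩ, hKxy, hwy, hyx⟩ :=
    Measure.exists_mem_of_measure_ne_zero_of_ae hΩc (ae_restrict_of_ae (hx.and (hw0.and (volume.ae_ne x))))
  have huv : u y ≤ v y := sub_nonpos.mp (max_eq_right_iff.mp (hwy hyΩ))
  exact fracPLaplacianKernel_ne_zero hp _ (Ne.symm hyx) huv hvu hKxy

/-- Strict T-monotonicity of the fractional `p`-Laplacian: if
`w = (u - v)⁺` vanishes a.e. outside the bounded measurable set `Ω` and the (pointwise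
nonnegative) energy
`∬ (J_p(u(x)-u(y)) - J_p(v(x)-v(y))) (w(x)-w(y)) / ‖x-y‖^(N+ps) dx dy` is `≤ 0`,
then `u ≤ v` almost everywhere. -/
theorem statement6 {N : ℕ} (hN : 1 ≤ N) {p s : ℝ} (hp : 2 ≤ p)
    (hs : s ∈ Set.Ioo (0 : ℝ) 1) (hNps : p * s < (N : ℝ))
    (Ω : Set (EuclideanSpace ℝ (Fin N)))
    (hΩm : MeasurableSet Ω) (hΩb : Bornology.IsBounded Ω)
    (u v : EuclideanSpace ℝ (Fin N) → ℝ) (hu : Measurable u) (hv : Measurable v)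
    (hw0 : ∀ᵐ x, x ∉ Ω → max (u x - v x) 0 = 0)
    (hK : (∫⁻ x, ∫⁻ y, ENNReal.ofReal
        (((|u x - u y| ^ (p - 2) * (u x - u y) - |v x - v y| ^ (p - 2) * (v x - v y)) *
            (max (u x - v x) 0 - max (u y - v y) 0)) /
          ‖x - y‖ ^ ((N : ℝ) + p * s))) ≤ 0) :
    ∀ᵐ x, u x ≤ v x :=
  statement6_general hN hp Ω hΩb u v hu hv hw0 hK
end

section
/- Let η, γ ∈ ℝ, let f : [0,∞) → ℝ be given by f(t) = (η t² − γ t + √t)/(t+1), and let F(t) = ∫₀ᵗ f(τ) dτ. Then for every μ with 3/2 < μ < 2 there exists δ > 0 such that μ F(t) ≥ f(t) t for all t ∈ (0, δ]. (This is the reverse Ambrosetti–Rabinowitz condition near the origin for the model nonlinearity.) -/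
open Filter intervalIntegral

/-- Reverse Ambrosetti–Rabinowitz condition near the origin for the
model nonlinearity: for `f(t) = (η t² − γ t + √t)/(t+1)` and `F(t) = ∫₀ᵗ f`, for every
`μ ∈ (3/2, 2)` there exists `δ > 0` such that `μ F(t) ≥ f(t) t` for all `t ∈ (0, δ]`. -/
theorem statement15 (η γ : ℝ) (f F : ℝ → ℝ)
    (hf : ∀ t : ℝ, 0 ≤ t → f t = (η * t ^ 2 - γ * t + Real.sqrt t) / (t + 1))
    (hF : ∀ t : ℝ, 0 ≤ t → F t = ∫ τ in (0 : ℝ)..t, f τ) :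
    ∀ μ : ℝ, 3 / 2 < μ → μ < 2 →
      ∃ δ : ℝ, 0 < δ ∧ ∀ t ∈ Set.Ioc (0 : ℝ) δ, f t * t ≤ μ * F t := by
  intro μ hμ1 hμ2
  obtain ⟨C, hCdef⟩ : ∃ C : ℝ, C = |η| + |γ| + 1 := ⟨_, rfl⟩
  have hC0 : 0 < C := by rw [hCdef]; positivity
  have hcoef : 0 < 2 * μ / 3 - 1 := by linarith
  have hden : 0 < C * (1 + μ / 2) := by nlinarith
  obtain ⟨ε, hεdef⟩ : ∃ e : ℝ, e = (2 * μ / 3 - 1) / (C * (1 + μ / 2)) := ⟨_, rfl⟩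
  have hε : 0 < ε := hεdef ▸ div_pos hcoef hden
  refine ⟨min 1 (ε ^ 2), by positivity, ?_⟩
  intro t ht
  obtain ⟨ht0, htδ⟩ := ht
  have ht1 : t ≤ 1 := le_trans htδ (min_le_left _ _)
  have htε : Real.sqrt t ≤ ε := by
    have h2 : t ≤ ε ^ 2 := le_trans htδ (min_le_right _ _)
    calc Real.sqrt t ≤ Real.sqrt (ε ^ 2) := Real.sqrt_le_sqrt h2
      _ = ε := Real.sqrt_sq hε.le
  set g : ℝ → ℝ := fun τ => (η * τ ^ 2 - γ * τ + Real.sqrt τ) / (τ + 1) with hgdef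
  have huIcc : Set.uIcc (0 : ℝ) t = Set.Icc 0 t := Set.uIcc_of_le ht0.le
  have hgcont : ContinuousOn g (Set.uIcc (0 : ℝ) t) := by
    apply ContinuousOn.div
    · fun_prop
    · fun_prop
    · intro x hx
      rw [huIcc] at hx
      have : (0:ℝ) ≤ x := hx.1
      linarith
  have hgint : IntervalIntegrable g MeasureTheory.volume 0 t :=
    hgcont.intervalIntegrable
  have hlcont : ContinuousOn (fun τ => Real.sqrt τ - C * τ) (Set.uIcc (0 : ℝ) t) := by
    fun_prop
  have hlint : IntervalIntegrable (fun τ => Real.sqrt τ - C * τ)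
      MeasureTheory.volume 0 t := hlcont.intervalIntegrable
  -- pointwise lower bound on [0, t]
  have hlower : ∀ τ ∈ Set.Icc (0:ℝ) t, Real.sqrt τ - C * τ ≤ g τ := by
    intro τ hτ
    obtain ⟨hτ0, hτt⟩ := hτ
    have hτ1 : τ ≤ 1 := le_trans hτt ht1
    have hs0 : 0 ≤ Real.sqrt τ := Real.sqrt_nonneg τ
    have hs1 : Real.sqrt τ ≤ 1 := by
      rw [show (1:ℝ) = Real.sqrt 1 by simp]
      exact Real.sqrt_le_sqrt hτ1
    have hsq : Real.sqrt τ ^ 2 = τ := Real.sq_sqrt hτ0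
    have hd : (0:ℝ) < τ + 1 := by linarith
    rw [hgdef]
    rw [le_div_iff₀ hd]
    have h1 : 0 ≤ (η + |η|) * τ ^ 2 := mul_nonneg (by linarith [neg_abs_le η]) (sq_nonneg τ)
    have h2 : 0 ≤ (|γ| - γ) * τ :=
      mul_nonneg (by linarith [le_abs_self γ]) hτ0
    nlinarith [hCdef, mul_nonneg hτ0 (sub_nonneg.2 hs1), h1, h2,
      mul_nonneg (abs_nonneg γ) (sq_nonneg τ), sq_nonneg τ,
      mul_nonneg (abs_nonneg η) hτ0]
  -- pointwise upper bound at t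
  have hupper : g t ≤ Real.sqrt t + C * t := by
    have hs0 : 0 ≤ Real.sqrt t := Real.sqrt_nonneg t
    have hs1 : Real.sqrt t ≤ 1 := by
      rw [show (1:ℝ) = Real.sqrt 1 by simp]
      exact Real.sqrt_le_sqrt ht1
    have hsq : Real.sqrt t ^ 2 = t := Real.sq_sqrt ht0.le
    have hd : (0:ℝ) < t + 1 := by linarith
    rw [hgdef]
    rw [div_le_iff₀ hd]
    nlinarith [hCdef, mul_nonneg (sub_nonneg.2 (le_abs_self η)) (sq_nonneg t),
      mul_nonneg (by linarith [neg_abs_le γ] : (0:ℝ) ≤ γ + |γ|) ht0.le,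
      mul_nonneg (abs_nonneg γ) (sq_nonneg t), sq_nonneg t,
      mul_nonneg (abs_nonneg η) ht0.le, mul_nonneg hs0 ht0.le]
  -- F t = ∫ g
  have hFg : F t = ∫ τ in (0:ℝ)..t, g τ := by
    rw [hF t ht0.le]
    apply intervalIntegral.integral_congr
    intro x hx
    rw [huIcc] at hx
    exact hf x hx.1
  -- compute lower-bound integral
  have hsqrtint : ∫ τ in (0:ℝ)..t, Real.sqrt τ = 2 / 3 * (t * Real.sqrt t) := by
    have h1 : ∫ τ in (0:ℝ)..t, Real.sqrt τ = ∫ τ in (0:ℝ)..t, τ ^ ((1:ℝ)/2) := by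
      apply intervalIntegral.integral_congr
      intro x hx
      exact Real.sqrt_eq_rpow x
    rw [h1, integral_rpow (Or.inl (by norm_num))]
    have h0 : (0:ℝ) ^ ((1:ℝ)/2 + 1) = 0 := by
      rw [Real.zero_rpow]; norm_num
    rw [h0]
    have h2 : t ^ ((1:ℝ)/2 + 1) = t * Real.sqrt t := by
      rw [show (1:ℝ)/2 + 1 = 1 + 1/2 by ring, Real.rpow_add ht0,
        Real.rpow_one, Real.sqrt_eq_rpow]
    rw [h2]; ring
  have hlint_val : ∫ τ in (0:ℝ)..t, (Real.sqrt τ - C * τ) =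
      2 / 3 * (t * Real.sqrt t) - C * (t ^ 2 / 2) := by
    rw [intervalIntegral.integral_sub ((Real.continuous_sqrt.continuousOn).intervalIntegrable)
      (by apply Continuous.intervalIntegrable; fun_prop)]
    rw [hsqrtint, intervalIntegral.integral_const_mul, integral_id]
    ring
  have hFlow : 2 / 3 * (t * Real.sqrt t) - C * (t ^ 2 / 2) ≤ F t := by
    rw [hFg, ← hlint_val]
    exact intervalIntegral.integral_mono_on ht0.le hlint hgint hlower
  -- conclude
  have hft : f t = g t := hf t ht0.le
  have hs0 : 0 < Real.sqrt t := Real.sqrt_pos.2 ht0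
  have hsq : Real.sqrt t ^ 2 = t := Real.sq_sqrt ht0.le
  have hεeq : ε * (C * (1 + μ / 2)) = 2 * μ / 3 - 1 := by
    rw [hεdef]; field_simp
  have hkey : C * (1 + μ / 2) * Real.sqrt t ≤ 2 * μ / 3 - 1 := by
    calc C * (1 + μ / 2) * Real.sqrt t ≤ C * (1 + μ / 2) * ε := by
          exact mul_le_mul_of_nonneg_left htε hden.le
      _ = 2 * μ / 3 - 1 := by rw [mul_comm]; exact hεeq
  have hμ0 : 0 < μ := by linarith
  have hfub : f t * t ≤ (Real.sqrt t + C * t) * t := by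
    rw [hft]
    exact mul_le_mul_of_nonneg_right hupper ht0.le
  have hFlb : μ * (2 / 3 * (t * Real.sqrt t) - C * (t ^ 2 / 2)) ≤ μ * F t :=
    mul_le_mul_of_nonneg_left hFlow hμ0.le
  refine le_trans hfub (le_trans ?_ hFlb)
  set s := Real.sqrt t with hsdef
  have hts : t = s * s := by rw [hsdef, Real.mul_self_sqrt ht0.le]
  rw [hts]
  have hmul : C * (1 + μ / 2) * s * s ^ 3 ≤ (2 * μ / 3 - 1) * s ^ 3 :=
    mul_le_mul_of_nonneg_right hkey (by positivity)
  nlinarith [hmul]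
end

section
/- Let p ∈ (1,∞), q ∈ (1,p), r ∈ (p,∞), and let c₀, c₁, δ₀ > 0. Let g : ℝ → ℝ be continuous and satisfy |g(t)| ≤ c₀ (1 + |t|^{p−1}) for all t ∈ ℝ, g(t) ≥ c₁ t^{q−1} for all t ∈ [0, δ₀], and g(t) ≤ c₁ |t|^{q−2} t for all t ∈ [−δ₀, 0]. Then there exist constants C₁, C₂ > 0 such that G(t) := ∫₀ᵗ g(τ) dτ satisfies G(t) ≥ C₁ |t|^q − C₂ |t|^r for all t ∈ ℝ. -/
open Set intervalIntegral

lemma aux16 {p q r : ℝ} (hp : 1 < p) (hq : 1 < q) (hqp : q < p) (hpr : p < r)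
    {c₀ c₁ δ₀ : ℝ} (hc₀ : 0 < c₀) (hc₁ : 0 < c₁) (hδ₀ : 0 < δ₀)
    (g : ℝ → ℝ) (hg : Continuous g)
    (hgrow : ∀ t : ℝ, |g t| ≤ c₀ * (1 + |t| ^ (p - 1)))
    (hpos : ∀ t ∈ Set.Icc (0 : ℝ) δ₀, c₁ * t ^ (q - 1) ≤ g t)
    {t : ℝ} (ht : 0 ≤ t) :
    (c₁ / q) * t ^ q -
      ((c₁ / q) * δ₀ ^ (q - r) + c₀ * δ₀ ^ (1 - r) + c₀ * δ₀ ^ (p - r)) * t ^ r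
      ≤ ∫ τ in (0 : ℝ)..t, g τ := by
  have hq0 : (0:ℝ) < q := by linarith
  have hqr : q - 1 + 1 = q := by ring
  have hC₂pos : 0 < (c₁ / q) * δ₀ ^ (q - r) + c₀ * δ₀ ^ (1 - r) + c₀ * δ₀ ^ (p - r) := by
    have h1 := Real.rpow_pos_of_pos hδ₀ (q - r)
    have h2 := Real.rpow_pos_of_pos hδ₀ (1 - r)
    have h3 := Real.rpow_pos_of_pos hδ₀ (p - r)
    positivity
  have htr : (0:ℝ) ≤ t ^ r := Real.rpow_nonneg ht r
  rcases le_or_gt t δ₀ with hcase | hcase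
  · -- small t
    have hint : IntervalIntegrable (fun x : ℝ => c₁ * x ^ (q - 1)) MeasureTheory.volume 0 t :=
      (intervalIntegral.intervalIntegrable_rpow' (by linarith)).const_mul c₁
    have hmono : ∫ τ in (0:ℝ)..t, c₁ * τ ^ (q - 1) ≤ ∫ τ in (0:ℝ)..t, g τ := by
      apply intervalIntegral.integral_mono_on ht hint (hg.intervalIntegrable 0 t)
      exact fun x hx => hpos x ⟨hx.1, hx.2.trans hcase⟩
    have hval : ∫ τ in (0:ℝ)..t, c₁ * τ ^ (q - 1) = (c₁ / q) * t ^ q := by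
      rw [intervalIntegral.integral_const_mul, integral_rpow (Or.inl (by linarith)),
        hqr, Real.zero_rpow (by linarith)]
      ring
    rw [hval] at hmono
    nlinarith [mul_nonneg hC₂pos.le htr]
  · -- large t
    have ht0 : 0 < t := lt_trans hδ₀ hcase
    have hintb : IntervalIntegrable (fun x : ℝ => -(c₀ * (1 + x ^ (p - 1))))
        MeasureTheory.volume 0 t :=
      (((_root_.intervalIntegrable_const (c := (1:ℝ))).add
        (intervalIntegral.intervalIntegrable_rpow' (by linarith))).const_mul c₀).neg
    have hmono : ∫ τ in (0:ℝ)..t, -(c₀ * (1 + τ ^ (p - 1))) ≤ ∫ τ in (0:ℝ)..t, g τ := by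
      apply intervalIntegral.integral_mono_on ht hintb (hg.intervalIntegrable 0 t)
      intro x hx
      have := hgrow x
      rw [abs_of_nonneg hx.1] at this
      have := neg_abs_le (g x)
      linarith [hgrow x, abs_of_nonneg hx.1 ▸ hgrow x]
    have hval : ∫ τ in (0:ℝ)..t, -(c₀ * (1 + τ ^ (p - 1))) = -(c₀ * (t + t ^ p / p)) := by
      rw [intervalIntegral.integral_neg, intervalIntegral.integral_const_mul,
        intervalIntegral.integral_add (_root_.intervalIntegrable_const)
          (intervalIntegral.intervalIntegrable_rpow' (by linarith)),
        intervalIntegral.integral_const, integral_rpow (Or.inl (by linarith)),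
        Real.zero_rpow (by linarith), show p - 1 + 1 = p by ring]
      simp only [smul_eq_mul]
      ring
    rw [hval] at hmono
    -- bounds: t^q ≤ δ₀^(q-r) * t^r etc.
    have key : ∀ s : ℝ, s < r → t ^ s ≤ δ₀ ^ (s - r) * t ^ r := by
      intro s hs
      have h1 : t ^ s = t ^ (s - r) * t ^ r := by
        rw [← Real.rpow_add ht0]; ring_nf
      rw [h1]
      have h2 : t ^ (s - r) ≤ δ₀ ^ (s - r) :=
        Real.rpow_le_rpow_of_nonpos hδ₀ hcase.le (by linarith)
      exact mul_le_mul_of_nonneg_right h2 htr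
    have k1 := key q (by linarith)
    have k2 := key p hpr
    have k3 := key 1 (by linarith)
    rw [Real.rpow_one] at k3
    have htp : 0 ≤ t ^ p := Real.rpow_nonneg ht0.le p
    have hppos : 0 < p := by linarith
    have htpp : t ^ p / p ≤ t ^ p := by
      rw [div_le_iff₀ hppos]; nlinarith
    have hc1q : 0 < c₁ / q := by positivity
    nlinarith [mul_le_mul_of_nonneg_left k1 hc1q.le,
      mul_le_mul_of_nonneg_left k2 hc₀.le, mul_le_mul_of_nonneg_left k3 hc₀.le]

/-- If a continuous `g : ℝ → ℝ` has subcritical `(p-1)`-growth and is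
`(q-1)`-sublinear near the origin (`1 < q < p < r`), then its primitive
`G(t) = ∫₀ᵗ g` satisfies `G(t) ≥ C₁ |t|^q − C₂ |t|^r` for all `t ∈ ℝ`, for suitable
constants `C₁, C₂ > 0`. -/
theorem statement16 {p q r : ℝ} (hp : 1 < p) (hq : 1 < q) (hqp : q < p) (hpr : p < r)
    {c₀ c₁ δ₀ : ℝ} (hc₀ : 0 < c₀) (hc₁ : 0 < c₁) (hδ₀ : 0 < δ₀)
    (g : ℝ → ℝ) (hg : Continuous g)
    (hgrow : ∀ t : ℝ, |g t| ≤ c₀ * (1 + |t| ^ (p - 1)))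
    (hpos : ∀ t ∈ Set.Icc (0 : ℝ) δ₀, c₁ * t ^ (q - 1) ≤ g t)
    (hneg : ∀ t ∈ Set.Icc (-δ₀) (0 : ℝ), g t ≤ c₁ * |t| ^ (q - 2) * t) :
    ∃ C₁ : ℝ, 0 < C₁ ∧ ∃ C₂ : ℝ, 0 < C₂ ∧
      ∀ t : ℝ, C₁ * |t| ^ q - C₂ * |t| ^ r ≤ ∫ τ in (0 : ℝ)..t, g τ := by
  have hq0 : (0:ℝ) < q := by linarith
  refine ⟨c₁ / q, by positivity,
    (c₁ / q) * δ₀ ^ (q - r) + c₀ * δ₀ ^ (1 - r) + c₀ * δ₀ ^ (p - r), ?_, ?_⟩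
  · have h1 := Real.rpow_pos_of_pos hδ₀ (q - r)
    have h2 := Real.rpow_pos_of_pos hδ₀ (1 - r)
    have h3 := Real.rpow_pos_of_pos hδ₀ (p - r)
    positivity
  intro t
  rcases le_or_gt 0 t with ht | ht
  · rw [abs_of_nonneg ht]
    exact aux16 hp hq hqp hpr hc₀ hc₁ hδ₀ g hg hgrow hpos ht
  · -- negative t: use g̃ u = -g(-u)
    set G : ℝ → ℝ := fun u => -g (-u) with hG
    have hGc : Continuous G := (hg.comp continuous_neg).neg
    have hGgrow : ∀ s : ℝ, |G s| ≤ c₀ * (1 + |s| ^ (p - 1)) := by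
      intro s; simpa [hG, abs_neg] using hgrow (-s)
    have hGpos : ∀ s ∈ Set.Icc (0 : ℝ) δ₀, c₁ * s ^ (q - 1) ≤ G s := by
      intro s hs
      have h := hneg (-s) ⟨by linarith [hs.2], by linarith [hs.1]⟩
      rw [abs_neg] at h
      rcases eq_or_lt_of_le hs.1 with h0 | h0
      · subst h0
        simp only [hG, neg_zero, mul_zero] at h ⊢
        rw [Real.zero_rpow (show q - 1 ≠ 0 by linarith), mul_zero]
        linarith
      · have habs : |s| = s := abs_of_pos h0
        rw [habs] at h
        have hsq : s ^ (q - 2) * s = s ^ (q - 1) := by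
          have hh := (Real.rpow_add h0 (q - 2) 1).symm
          rw [Real.rpow_one] at hh
          rw [hh, show q - 2 + 1 = q - 1 by ring]
        simp only [hG]
        nlinarith [h, hsq]
    have hts : (0:ℝ) ≤ -t := by linarith
    have := aux16 hp hq hqp hpr hc₀ hc₁ hδ₀ G hGc hGgrow hGpos hts
    have hint : ∫ τ in (0:ℝ)..(-t), G τ = ∫ τ in (0:ℝ)..t, g τ := by
      rw [show (∫ τ in (0:ℝ)..(-t), G τ) = -∫ τ in (0:ℝ)..(-t), g (-τ) by
        simp [hG, intervalIntegral.integral_neg]]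
      rw [intervalIntegral.integral_comp_neg g]
      simp [intervalIntegral.integral_symm t 0]
    rw [hint] at this
    rw [abs_of_neg ht]
    exact this
end

section
/- Let Ω ⊆ ℝ^N be a bounded open set and let m : Ω → ℝ be measurable, bounded, and nonnegative. Then there exists λ > 0 such that for every measurable u : ℝ^N → ℝ with u = 0 almost everywhere on ℝ^N ∖ Ω one has λ ∫_Ω m(x) |u(x)|^p dx ≤ [u]_{s,p}^p = ∬_{ℝ^N×ℝ^N} |u(x)−u(y)|^p / |x−y|^{N+ps} dx dy. (Positivity of the first weighted eigenvalue λ₁(m) of the fractional p-Laplacian; a fractional Poincaré inequality.) -/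
/-!
Fix a ball `A` of positive measure disjoint from `Ω`, and a bound `d` for the distances between
points of `Ω` and of `A`. Since `u = 0` on `A`, for every `x ∈ Ω` the kernel
`|u x - u y|^p / ‖x - y‖^(N+ps)` is at least `|u x|^p / d^(N+ps)` for `y ∈ A`, so integrating in
`y` over `A` and then in `x` over `Ω` gives
`|A| ∫_Ω |u|^p ≤ d^(N+ps) [u]_{s,p}^p`; the bounded weight only costs its upper bound.
-/

open MeasureTheory Set Metric

theorem ENNReal.exists_pos_ofReal_mul_le {a b : ENNReal} (ha₀ : a ≠ 0) (ha : a ≠ ⊤) (hb : b ≠ ⊤) :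
    ∃ lam : ℝ, 0 < lam ∧ ∀ x y : ENNReal, a * x ≤ b * y → ENNReal.ofReal lam * x ≤ y := by
  have hb₁ : b + 1 ≠ ⊤ := ENNReal.add_ne_top.2 ⟨hb, ENNReal.one_ne_top⟩
  have hb₀ : b + 1 ≠ 0 := by simp
  refine ⟨(a / (b + 1)).toReal, ENNReal.toReal_pos (ENNReal.div_ne_zero.2 ⟨ha₀, hb₁⟩)
    (ENNReal.div_ne_top ha hb₀), fun x y h => ?_⟩
  rw [ENNReal.ofReal_toReal (ENNReal.div_ne_top ha hb₀), ← ENNReal.mul_div_right_comm]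
  refine ENNReal.div_le_of_le_mul ?_
  calc a * x ≤ b * y := h
    _ ≤ (b + 1) * y := by gcongr; exact le_self_add
    _ = y * (b + 1) := mul_comm _ _

theorem Bornology.IsBounded.exists_closedBall_disjoint {E : Type*} [NormedAddCommGroup E]
    [NormedSpace ℝ E] [Nontrivial E] {Ω : Set E} (hΩ : Bornology.IsBounded Ω) :
    ∃ c : E, ∃ r > 0, Disjoint Ω (closedBall c r) := by
  obtain ⟨r, hr, hΩr⟩ := hΩ.subset_ball_lt 0 0
  obtain ⟨c, hc⟩ := exists_norm_eq E (by positivity : 0 ≤ 2 * r)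
  refine ⟨c, r, hr, Disjoint.mono_left hΩr (closedBall_disjoint_ball ?_).symm⟩
  rw [dist_zero_right, hc]
  linarith

theorem setLIntegral_ofReal_mul_le {α : Type*} [MeasurableSpace α] {μ : Measure α} {Ω : Set α}
    (hΩ : MeasurableSet Ω) {m f : α → ℝ} {M : ℝ} (hm : ∀ x ∈ Ω, m x ≤ M) (hf : 0 ≤ f) :
    ∫⁻ x in Ω, ENNReal.ofReal (m x * f x) ∂μ ≤
      ENNReal.ofReal M * ∫⁻ x in Ω, ENNReal.ofReal (f x) ∂μ := by
  rw [← lintegral_const_mul' _ _ ENNReal.ofReal_ne_top]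
  refine setLIntegral_mono' hΩ fun x hx => ?_
  rw [← ENNReal.ofReal_mul' (hf x)]
  exact ENNReal.ofReal_le_ofReal (mul_le_mul_of_nonneg_right (hm x hx) (hf x))

section Gagliardo

variable {E : Type*} [NormedAddCommGroup E] [MeasurableSpace E] {μ : Measure E} {A : Set E}
  {u : E → ℝ} {p q d : ℝ}

theorem measure_mul_ofReal_rpow_le_lintegral (hA : MeasurableSet A)
    (hu : ∀ᵐ y ∂μ, y ∈ A → u y = 0) (hq : 0 ≤ q) {x : E} (hxA : x ∉ A)
    (hd : ∀ y ∈ A, ‖x - y‖ ≤ d) :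
    μ A * ENNReal.ofReal (|u x| ^ p) ≤
      ENNReal.ofReal (d ^ q) * ∫⁻ y, ENNReal.ofReal (|u x - u y| ^ p / ‖x - y‖ ^ q) ∂μ := by
  calc μ A * ENNReal.ofReal (|u x| ^ p)
      = ∫⁻ _ in A, ENNReal.ofReal (|u x| ^ p) ∂μ := by rw [setLIntegral_const, mul_comm]
    _ ≤ ∫⁻ y in A, ENNReal.ofReal (d ^ q) *
          ENNReal.ofReal (|u x - u y| ^ p / ‖x - y‖ ^ q) ∂μ := by
        refine setLIntegral_mono_ae' hA (hu.mono fun y huy hyA => ?_)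
        have hxy : 0 < ‖x - y‖ := norm_pos_iff.2 (sub_ne_zero.2 fun h => hxA (h ▸ hyA))
        have hkernel : ‖x - y‖ ^ q ≤ d ^ q :=
          Real.rpow_le_rpow (norm_nonneg _) (hd y hyA) hq
        have hratio : 0 ≤ |u x| ^ p / ‖x - y‖ ^ q := by positivity
        rw [← ENNReal.ofReal_mul ((Real.rpow_pos_of_pos hxy q).le.trans hkernel), huy hyA,
          sub_zero]
        refine ENNReal.ofReal_le_ofReal ?_
        calc |u x| ^ p = ‖x - y‖ ^ q * (|u x| ^ p / ‖x - y‖ ^ q) :=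
              (mul_div_cancel₀ _ (Real.rpow_pos_of_pos hxy q).ne').symm
          _ ≤ d ^ q * (|u x| ^ p / ‖x - y‖ ^ q) := mul_le_mul_of_nonneg_right hkernel hratio
    _ ≤ ENNReal.ofReal (d ^ q) * ∫⁻ y, ENNReal.ofReal (|u x - u y| ^ p / ‖x - y‖ ^ q) ∂μ := by
        rw [lintegral_const_mul' _ _ ENNReal.ofReal_ne_top]
        gcongr
        exact Measure.restrict_le_self

theorem measure_mul_setLIntegral_rpow_le_gagliardo {Ω : Set E} (hΩ : MeasurableSet Ω)
    (hA : MeasurableSet A) (hΩA : Disjoint Ω A) (hu : ∀ᵐ y ∂μ, y ∈ A → u y = 0) (hq : 0 ≤ q)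
    (hd : ∀ x ∈ Ω, ∀ y ∈ A, ‖x - y‖ ≤ d) :
    μ A * ∫⁻ x in Ω, ENNReal.ofReal (|u x| ^ p) ∂μ ≤
      ENNReal.ofReal (d ^ q) *
        ∫⁻ x, ∫⁻ y, ENNReal.ofReal (|u x - u y| ^ p / ‖x - y‖ ^ q) ∂μ ∂μ := by
  calc μ A * ∫⁻ x in Ω, ENNReal.ofReal (|u x| ^ p) ∂μ
      ≤ ∫⁻ x in Ω, μ A * ENNReal.ofReal (|u x| ^ p) ∂μ := lintegral_const_mul_le _ _
    _ ≤ ∫⁻ x in Ω, ENNReal.ofReal (d ^ q) *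
          ∫⁻ y, ENNReal.ofReal (|u x - u y| ^ p / ‖x - y‖ ^ q) ∂μ ∂μ :=
        setLIntegral_mono' hΩ fun x hx =>
          measure_mul_ofReal_rpow_le_lintegral hA hu hq (hΩA.notMem_of_mem_left hx) (hd x hx)
    _ ≤ ENNReal.ofReal (d ^ q) *
          ∫⁻ x, ∫⁻ y, ENNReal.ofReal (|u x - u y| ^ p / ‖x - y‖ ^ q) ∂μ ∂μ := by
        rw [lintegral_const_mul' _ _ ENNReal.ofReal_ne_top]
        gcongr
        exact Measure.restrict_le_self

end Gagliardo

theorem statement18_general {N : ℕ} (hN : 1 ≤ N) {p s : ℝ} (hp : 2 ≤ p)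
    (hs : s ∈ Set.Ioo (0 : ℝ) 1)
    (Ω : Set (EuclideanSpace ℝ (Fin N)))
    (hΩo : IsOpen Ω) (hΩb : Bornology.IsBounded Ω)
    (m : EuclideanSpace ℝ (Fin N) → ℝ)
    (hmb : ∃ M : ℝ, ∀ x ∈ Ω, m x ≤ M) :
    ∃ lam : ℝ, 0 < lam ∧
      ∀ u : EuclideanSpace ℝ (Fin N) → ℝ, Measurable u → (∀ᵐ x, x ∉ Ω → u x = 0) →
        ENNReal.ofReal lam * ∫⁻ x in Ω, ENNReal.ofReal (m x * |u x| ^ p) ≤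
          ∫⁻ x, ∫⁻ y,
            ENNReal.ofReal (|u x - u y| ^ p / ‖x - y‖ ^ ((N : ℝ) + p * s)) := by
  obtain ⟨M, hM⟩ := hmb
  have : NeZero N := ⟨by omega⟩
  have hq : 0 ≤ (N : ℝ) + p * s := add_nonneg N.cast_nonneg (mul_pos (by linarith) hs.1).le
  obtain ⟨c, r, hr, hΩA⟩ := hΩb.exists_closedBall_disjoint
  obtain ⟨d, hd⟩ := isBounded_iff.1 (hΩb.union isBounded_closedBall)
  obtain ⟨lam, hlam, hlam_le⟩ := ENNReal.exists_pos_ofReal_mul_le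
    (measure_closedBall_pos volume c hr).ne' measure_closedBall_lt_top.ne
    (ENNReal.mul_ne_top ENNReal.ofReal_ne_top ENNReal.ofReal_ne_top :
      ENNReal.ofReal M * ENNReal.ofReal (d ^ ((N : ℝ) + p * s)) ≠ ⊤)
  refine ⟨lam, hlam, fun u _ hu => hlam_le _ _ ?_⟩
  set A := closedBall c r
  have hu_A : ∀ᵐ y, y ∈ A → u y = 0 := hu.mono fun y hy hyA => hy (hΩA.notMem_of_mem_right hyA)
  calc volume A * ∫⁻ x in Ω, ENNReal.ofReal (m x * |u x| ^ p)
      ≤ volume A * (ENNReal.ofReal M * ∫⁻ x in Ω, ENNReal.ofReal (|u x| ^ p)) := by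
        gcongr
        exact setLIntegral_ofReal_mul_le hΩo.measurableSet hM fun x => by positivity
    _ = ENNReal.ofReal M * (volume A * ∫⁻ x in Ω, ENNReal.ofReal (|u x| ^ p)) := by ring
    _ ≤ _ := by
        rw [mul_assoc (ENNReal.ofReal M)]
        gcongr ENNReal.ofReal M * ?_
        exact measure_mul_setLIntegral_rpow_le_gagliardo hΩo.measurableSet measurableSet_closedBall
          hΩA hu_A hq fun x hx y hy => by
            simpa [dist_eq_norm] using hd (Or.inl hx) (Or.inr hy)

/-- Positivity of the first weighted eigenvalue `λ₁(m)` of the fractional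
`p`-Laplacian (a fractional Poincaré inequality): for a bounded open `Ω` and a bounded,
nonnegative, measurable weight `m`, there is `λ > 0` such that for every measurable `u`
vanishing a.e. outside `Ω`,
`λ ∫_Ω m |u|^p ≤ ∬ |u(x)-u(y)|^p / ‖x-y‖^(N+ps) dx dy`. -/
theorem statement18 {N : ℕ} (hN : 1 ≤ N) {p s : ℝ} (hp : 2 ≤ p)
    (hs : s ∈ Set.Ioo (0 : ℝ) 1) (hNps : p * s < (N : ℝ))
    (Ω : Set (EuclideanSpace ℝ (Fin N)))
    (hΩo : IsOpen Ω) (hΩb : Bornology.IsBounded Ω)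
    (m : EuclideanSpace ℝ (Fin N) → ℝ) (hm : Measurable m)
    (hmb : ∃ M : ℝ, ∀ x ∈ Ω, m x ≤ M) (hm0 : ∀ x ∈ Ω, 0 ≤ m x) :
    ∃ lam : ℝ, 0 < lam ∧
      ∀ u : EuclideanSpace ℝ (Fin N) → ℝ, Measurable u → (∀ᵐ x, x ∉ Ω → u x = 0) →
        ENNReal.ofReal lam * ∫⁻ x in Ω, ENNReal.ofReal (m x * |u x| ^ p) ≤
          ∫⁻ x, ∫⁻ y,
            ENNReal.ofReal (|u x - u y| ^ p / ‖x - y‖ ^ ((N : ℝ) + p * s)) :=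
  statement18_general hN hp hs Ω hΩo hΩb m hmb
end
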